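/- arXiv:2311.13540 — 3 statements merged into one kernel-verified Lean document; each statement's English description precedes it below -/
import Mathlib

section
/- Let G be a 3-regular simple graph on a finite vertex type V, let M be a perfect matching of G, and let A be a set of vertices such that exactly 3 edges of G have exactly one endpoint in A. Then the number of those 3 crossing edges that belong to M is odd (hence equals 1 or 3). -/
open Finset

private lemma cross_iff' {V : Type*} (A : Set V) (a b : V) :
    (∃ v w, s(a,b) = s(v,w) ∧ v ∈ A ∧ w ∉ A) ↔ ((a ∈ A ∧ b ∉ A) ∨ (b ∈ A ∧ a ∉ A)) := by
  constructor
  · rintro ⟨v, w, h, hv, hw⟩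
    rw [Sym2.eq_iff] at h
    rcases h with ⟨rfl, rfl⟩ | ⟨rfl, rfl⟩
    · exact Or.inl ⟨hv, hw⟩
    · exact Or.inr ⟨hv, hw⟩
  · rintro (⟨ha, hb⟩ | ⟨hb, ha⟩)
    · exact ⟨a, b, rfl, ha, hb⟩
    · exact ⟨b, a, Sym2.eq_swap, hb, ha⟩

private lemma card_inter_mod_two {V : Type*} [Fintype V] [DecidableEq V]
    (A : Set V) [DecidablePred (· ∈ A)] (e : Sym2 V) (he : ¬ e.IsDiag) :
    (univ.filter (fun x => x ∈ e ∧ x ∈ A)).card % 2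
      = (if (∃ v w, e = s(v,w) ∧ v ∈ A ∧ w ∉ A) then 1 else 0) % 2 := by
  induction e with
  | _ a b =>
    rw [Sym2.isDiag_iff_proj_eq] at he
    have hinter : (univ.filter (fun x => x ∈ (s(a,b) : Sym2 V) ∧ x ∈ A))
        = ({a, b} : Finset V).filter (· ∈ A) := by
      ext x; simp [Sym2.mem_iff, or_and_right]
    have hab : a ≠ b := he
    simp only [cross_iff']
    rw [hinter, filter_insert, filter_singleton]
    by_cases ha : a ∈ A <;> by_cases hb : b ∈ A <;> simp [ha, hb, hab]

private lemma double_count {V : Type*} [Fintype V] [DecidableEq V]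
    (A : Set V) [DecidablePred (· ∈ A)] (S : Finset (Sym2 V)) :
    ∑ v ∈ univ.filter (· ∈ A), (S.filter (fun e => v ∈ e)).card
      = ∑ e ∈ S, (univ.filter (fun x => x ∈ e ∧ x ∈ A)).card := by
  simp only [Finset.card_filter]
  rw [Finset.sum_comm]
  refine Finset.sum_congr rfl fun e _ => ?_
  rw [← Finset.card_filter, ← Finset.card_filter]
  apply congrArg
  ext x
  simp [and_comm]

private lemma parity_key {V : Type*} [Fintype V] [DecidableEq V]
    (A : Set V) [DecidablePred (· ∈ A)] (S : Finset (Sym2 V))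
    (hS : ∀ e ∈ S, ¬ e.IsDiag) :
    (∑ v ∈ univ.filter (· ∈ A), (S.filter (fun e => v ∈ e)).card) % 2
      = (S.filter (fun e => ∃ v w, e = s(v,w) ∧ v ∈ A ∧ w ∉ A)).card % 2 := by
  rw [double_count, Finset.card_filter]
  rw [Finset.sum_nat_mod S 2]
  conv_rhs => rw [Finset.sum_nat_mod S 2]
  congr 1
  exact Finset.sum_congr rfl fun e he => card_inter_mod_two A e (hS e he)

/-- If `G` is a 3-regular simple graph, `M` is a perfect matching of `G`, and `A` is a
set of vertices such that exactly 3 edges of `G` have exactly one endpoint in `A`, then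
an odd number of those 3 crossing edges belong to `M`. -/
theorem threeEdgeCut_odd_matched {V : Type*} [Fintype V] (G : SimpleGraph V)
    [DecidableRel G.Adj] (h : G.IsRegularOfDegree 3) (M : G.Subgraph)
    (hM : M.IsPerfectMatching) (A : Set V)
    (hcut : {e ∈ G.edgeSet | ∃ v w, e = s(v, w) ∧ v ∈ A ∧ w ∉ A}.ncard = 3) :
    Odd {e ∈ G.edgeSet | (∃ v w, e = s(v, w) ∧ v ∈ A ∧ w ∉ A) ∧ e ∈ M.edgeSet}.ncard := by
  classical
  set A' : Finset V := univ.filter (· ∈ A) with hA'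
  set MF : Finset (Sym2 V) := (Set.toFinite M.edgeSet).toFinset with hMFdef
  have hMF : ∀ e, e ∈ MF ↔ e ∈ M.edgeSet := by
    intro e; exact Set.Finite.mem_toFinset _
  -- cut count as finset
  have hcutset : {e ∈ G.edgeSet | ∃ v w, e = s(v, w) ∧ v ∈ A ∧ w ∉ A}
      = ↑(G.edgeFinset.filter (fun e => ∃ v w, e = s(v,w) ∧ v ∈ A ∧ w ∉ A)) := by
    ext e; simp
  rw [hcutset, Set.ncard_coe_finset] at hcut
  have htarget : {e ∈ G.edgeSet | (∃ v w, e = s(v, w) ∧ v ∈ A ∧ w ∉ A) ∧ e ∈ M.edgeSet}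
      = ↑(MF.filter (fun e => ∃ v w, e = s(v,w) ∧ v ∈ A ∧ w ∉ A)) := by
    ext e
    simp only [Set.mem_setOf_eq, coe_filter, hMF]
    constructor
    · rintro ⟨_, hc, hm⟩; exact ⟨hm, hc⟩
    · rintro ⟨hm, hc⟩; exact ⟨M.edgeSet_subset hm, hc, hm⟩
  rw [htarget, Set.ncard_coe_finset]
  -- parity from the graph side: |A'| is odd
  have hG : (∑ v ∈ A', (G.edgeFinset.filter (fun e => v ∈ e)).card) % 2
      = 3 % 2 := by
    rw [parity_key A _ (fun e he => G.not_isDiag_of_mem_edgeSet (by simpa using he)), hcut]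
  have hdeg : ∀ v : V, (G.edgeFinset.filter (fun e => v ∈ e)).card = 3 := by
    intro v
    have := G.card_incidenceFinset_eq_degree (v := v)
    rw [G.incidenceFinset_eq_filter v] at this
    rw [this, h v]
  rw [Finset.sum_congr rfl (fun v _ => hdeg v), Finset.sum_const, smul_eq_mul] at hG
  -- parity from the matching side
  have hMdeg : ∀ v : V, (MF.filter (fun e => v ∈ e)).card = 1 := by
    intro v
    obtain ⟨w, hw, huniq⟩ := hM.1 (hM.2 v)
    have : MF.filter (fun e => v ∈ e) = {s(v, w)} := by
      ext e
      simp only [mem_filter, hMF, mem_singleton]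
      constructor
      · rintro ⟨hme, hve⟩
        induction e with
        | _ a b =>
          have hadj : M.Adj a b := hme
          rcases Sym2.mem_iff.mp hve with rfl | rfl
          · rw [huniq b hadj]
          · rw [Sym2.eq_swap, huniq a hadj.symm]
      · rintro rfl
        exact ⟨hw, Sym2.mem_mk_left v w⟩
    rw [this, Finset.card_singleton]
  have hMside : (∑ v ∈ A', (MF.filter (fun e => v ∈ e)).card) % 2
      = (MF.filter (fun e => ∃ v w, e = s(v,w) ∧ v ∈ A ∧ w ∉ A)).card % 2 :=
    parity_key A MF (fun e he => G.not_isDiag_of_mem_edgeSet (M.edgeSet_subset ((hMF e).mp he)))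
  rw [Finset.sum_congr rfl (fun v _ => hMdeg v), Finset.sum_const, smul_eq_mul, mul_one] at hMside
  rw [Nat.odd_iff]
  omega
end

section
/- Let o1, o2, o3 be points of the Euclidean plane and r1, r2, r3 > 0 real numbers such that dist oi oj = ri + rj for all i ≠ j (three mutually externally tangent circles). Then the three tangency points p12 = o1 + (r1/(r1+r2)) • (o2 - o1), p23 = o2 + (r2/(r2+r3)) • (o3 - o2), and p31 = o3 + (r3/(r3+r1)) • (o1 - o3) are affinely independent (not collinear), so they determine a unique circle. -/
/-- The three tangency points of three mutually externally tangent circles in the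
Euclidean plane are affinely independent (not collinear). -/
theorem tangency_points_affineIndependent (o1 o2 o3 : EuclideanSpace ℝ (Fin 2))
    (r1 r2 r3 : ℝ) (h1 : 0 < r1) (h2 : 0 < r2) (h3 : 0 < r3)
    (h12 : dist o1 o2 = r1 + r2) (h23 : dist o2 o3 = r2 + r3)
    (h31 : dist o3 o1 = r3 + r1) :
    AffineIndependent ℝ
      ![o1 + (r1 / (r1 + r2)) • (o2 - o1),
        o2 + (r2 / (r2 + r3)) • (o3 - o2),
        o3 + (r3 / (r3 + r1)) • (o1 - o3)] := by
  set a : ℝ := r1 / (r1 + r2) with ha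
  set b : ℝ := r2 / (r2 + r3) with hb
  set c : ℝ := r3 / (r3 + r1) with hc
  have hs12 : (0:ℝ) < r1 + r2 := by linarith
  have hs23 : (0:ℝ) < r2 + r3 := by linarith
  have hs31 : (0:ℝ) < r3 + r1 := by linarith
  have ha0 : 0 < a := div_pos h1 hs12
  have ha1 : a < 1 := (div_lt_one hs12).2 (by linarith)
  have hb0 : 0 < b := div_pos h2 hs23
  have hb1 : b < 1 := (div_lt_one hs23).2 (by linarith)
  have hc0 : 0 < c := div_pos h3 hs31
  have hc1 : c < 1 := (div_lt_one hs31).2 (by linarith)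
  -- the centers are not collinear, by the strict triangle inequality
  have hocol : ¬ Collinear ℝ ({o1, o2, o3} : Set (EuclideanSpace ℝ (Fin 2))) := by
    intro h
    have h13 : dist o1 o3 = r3 + r1 := by rw [dist_comm]; exact h31
    have h21 : dist o2 o1 = r1 + r2 := by rw [dist_comm]; exact h12
    have h32 : dist o3 o2 = r2 + r3 := by rw [dist_comm]; exact h23
    rcases h.wbtw_or_wbtw_or_wbtw with hw | hw | hw
    · have := hw.dist_add_dist
      rw [h12, h23, h13] at this; linarith
    · have := hw.dist_add_dist
      rw [h23, h31, h21] at this; linarith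
    · have := hw.dist_add_dist
      rw [h31, h12, h32] at this; linarith
  rw [affineIndependent_iff_not_collinear_set]
  intro hq
  apply hocol
  rw [collinear_iff_exists_forall_eq_smul_vadd] at hq ⊢
  obtain ⟨p₀, w, hw⟩ := hq
  obtain ⟨s0, hs0⟩ := hw _ (by simp : o1 + a • (o2 - o1) ∈ _)
  obtain ⟨s1, hs1⟩ := hw _ (by simp : o2 + b • (o3 - o2) ∈ _)
  obtain ⟨s2, hs2⟩ := hw _ (by simp : o3 + c • (o1 - o3) ∈ _)
  set D : ℝ := (1 - a - b) * (1 - c) + a * b with hD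
  have hDpos : 0 < D := by
    have : D = (1 - a) * (1 - b) * (1 - c) + a * b * c := by rw [hD]; ring
    rw [this]
    have := mul_pos (mul_pos (by linarith : (0:ℝ) < 1 - a) (by linarith : (0:ℝ) < 1 - b))
      (by linarith : (0:ℝ) < 1 - c)
    have := mul_pos (mul_pos ha0 hb0) hc0
    linarith
  have hDne : D ≠ 0 := ne_of_gt hDpos
  -- the differences of tangency points in terms of u = o2 - o1, v = o3 - o1
  have hd1 : (o2 + b • (o3 - o2)) - (o1 + a • (o2 - o1))
      = (1 - a - b) • (o2 - o1) + b • (o3 - o1) := by module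
  have hd2 : (o3 + c • (o1 - o3)) - (o1 + a • (o2 - o1))
      = (-a) • (o2 - o1) + (1 - c) • (o3 - o1) := by module
  have hd1' : (o2 + b • (o3 - o2)) - (o1 + a • (o2 - o1)) = (s1 - s0) • w := by
    rw [hs1, hs0]; simp [sub_smul]
  have hd2' : (o3 + c • (o1 - o3)) - (o1 + a • (o2 - o1)) = (s2 - s0) • w := by
    rw [hs2, hs0]; simp [sub_smul]
  -- solve for u and v
  have hu : D • (o2 - o1) = ((1 - c) * (s1 - s0) - b * (s2 - s0)) • w := by
    have e : D • (o2 - o1) = (1 - c) • ((1 - a - b) • (o2 - o1) + b • (o3 - o1))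
        - b • ((-a) • (o2 - o1) + (1 - c) • (o3 - o1)) := by rw [hD]; module
    rw [e, ← hd1, ← hd2, hd1', hd2']
    module
  have hv : D • (o3 - o1) = (a * (s1 - s0) + (1 - a - b) * (s2 - s0)) • w := by
    have e : D • (o3 - o1) = a • ((1 - a - b) • (o2 - o1) + b • (o3 - o1))
        + (1 - a - b) • ((-a) • (o2 - o1) + (1 - c) • (o3 - o1)) := by rw [hD]; module
    rw [e, ← hd1, ← hd2, hd1', hd2']
    module
  have ho2 : o2 = (D⁻¹ * ((1 - c) * (s1 - s0) - b * (s2 - s0))) • w +ᵥ o1 := by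
    have : o2 - o1 = (D⁻¹ * ((1 - c) * (s1 - s0) - b * (s2 - s0))) • w := by
      rw [mul_smul, ← hu, smul_smul, inv_mul_cancel₀ hDne, one_smul]
    simp only [vadd_eq_add]
    rw [← this]; abel
  have ho3 : o3 = (D⁻¹ * (a * (s1 - s0) + (1 - a - b) * (s2 - s0))) • w +ᵥ o1 := by
    have : o3 - o1 = (D⁻¹ * (a * (s1 - s0) + (1 - a - b) * (s2 - s0))) • w := by
      rw [mul_smul, ← hv, smul_smul, inv_mul_cancel₀ hDne, one_smul]
    simp only [vadd_eq_add]
    rw [← this]; abel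
  refine ⟨o1, w, ?_⟩
  rintro p (rfl | rfl | rfl)
  · exact ⟨0, by simp⟩
  · exact ⟨_, ho2⟩
  · exact ⟨_, ho3⟩
end

section
/- Let o1, o2, o3 be points of the Euclidean plane and r1, r2, r3 > 0 real numbers such that dist oi oj = ri + rj for all i ≠ j (three mutually externally tangent circles), and let p12, p23, p31 denote the three pairwise tangency points. Then there exist a point o and a real number ρ > 0 such that dist o p12 = dist o p23 = dist o p31 = ρ, and (dist o oi)^2 = ρ^2 + ri^2 for each i = 1, 2, 3; that is, the circle through the three tangency points intersects each of the three given circles orthogonally. -/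
set_option maxHeartbeats 1000000

lemma expand_sq (u v : EuclideanSpace ℝ (Fin 2)) (a b : ℝ) :
    ‖a • u + b • v‖ ^ 2 =
      a ^ 2 * ‖u‖ ^ 2 + 2 * (a * b) * (inner ℝ u v : ℝ) + b ^ 2 * ‖v‖ ^ 2 := by
  rw [norm_add_sq_real, real_inner_smul_left, real_inner_smul_right, norm_smul, norm_smul]
  simp [mul_pow, sq_abs]
  ring

/-- The circle through the three tangency points of three mutually externally tangent
circles in the Euclidean plane intersects each of the three given circles orthogonally:
there are a center `o` and radius `ρ > 0` equidistant from the three tangency points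
with `(dist o oi)^2 = ρ^2 + ri^2` for each `i`. -/
theorem tangency_circle_orthogonal (o1 o2 o3 : EuclideanSpace ℝ (Fin 2))
    (r1 r2 r3 : ℝ) (h1 : 0 < r1) (h2 : 0 < r2) (h3 : 0 < r3)
    (h12 : dist o1 o2 = r1 + r2) (h23 : dist o2 o3 = r2 + r3)
    (h31 : dist o3 o1 = r3 + r1) :
    ∃ (o : EuclideanSpace ℝ (Fin 2)) (ρ : ℝ), 0 < ρ ∧
      dist o (o1 + (r1 / (r1 + r2)) • (o2 - o1)) = ρ ∧
      dist o (o2 + (r2 / (r2 + r3)) • (o3 - o2)) = ρ ∧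
      dist o (o3 + (r3 / (r3 + r1)) • (o1 - o3)) = ρ ∧
      (dist o o1) ^ 2 = ρ ^ 2 + r1 ^ 2 ∧
      (dist o o2) ^ 2 = ρ ^ 2 + r2 ^ 2 ∧
      (dist o o3) ^ 2 = ρ ^ 2 + r3 ^ 2 := by
  set s : ℝ := r1 + r2 + r3 with hs
  have hspos : 0 < s := by positivity
  set k : ℝ := r1 * r2 * r3 / s with hk
  have hkpos : 0 < k := by positivity
  set α : ℝ := (r3 + r1) / (2 * s) with hα
  set β : ℝ := (r1 + r2) / (2 * s) with hβ
  refine ⟨o1 + α • (o2 - o1) + β • (o3 - o1), Real.sqrt k, Real.sqrt_pos.mpr hkpos, ?_⟩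
  have hU : ‖o2 - o1‖ ^ 2 = (r1 + r2) ^ 2 := by
    rw [← dist_eq_norm, dist_comm, h12]
  have hV : ‖o3 - o1‖ ^ 2 = (r3 + r1) ^ 2 := by
    rw [← dist_eq_norm, h31]
  have hW : ‖(o2 - o1) - (o3 - o1)‖ ^ 2 = (r2 + r3) ^ 2 := by
    have : (o2 - o1) - (o3 - o1) = o2 - o3 := by abel
    rw [this, ← dist_eq_norm, h23]
  have ht : (inner ℝ (o2 - o1) (o3 - o1) : ℝ)
      = r1 ^ 2 + r1 * r2 + r1 * r3 - r2 * r3 := by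
    have h := norm_sub_sq_real (o2 - o1) (o3 - o1)
    rw [hW, hU, hV] at h
    nlinarith [h]
  have h12' : r1 + r2 ≠ 0 := by positivity
  have h23' : r2 + r3 ≠ 0 := by positivity
  have h31' : r3 + r1 ≠ 0 := by positivity
  have hs' : s ≠ 0 := ne_of_gt hspos
  have key : ∀ a b c : ℝ, a ^ 2 * ‖o2 - o1‖ ^ 2 + 2 * (a * b) * (inner ℝ (o2 - o1) (o3 - o1) : ℝ)
      + b ^ 2 * ‖o3 - o1‖ ^ 2 = c →
      ‖a • (o2 - o1) + b • (o3 - o1)‖ ^ 2 = c := by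
    intro a b c hc
    rw [expand_sq]; exact hc
  have sqrt_of : ∀ x : ℝ, 0 ≤ x → x ^ 2 = k → x = Real.sqrt k := by
    intro x hx hxk
    calc x = Real.sqrt (x ^ 2) := (Real.sqrt_sq hx).symm
      _ = Real.sqrt k := by rw [hxk]
  have hρsq : Real.sqrt k ^ 2 = k := Real.sq_sqrt hkpos.le
  refine ⟨?_, ?_, ?_, ?_, ?_, ?_⟩
  · apply sqrt_of _ dist_nonneg
    rw [dist_eq_norm]
    have e : (o1 + α • (o2 - o1) + β • (o3 - o1)) - (o1 + (r1 / (r1 + r2)) • (o2 - o1))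
        = (α - r1 / (r1 + r2)) • (o2 - o1) + β • (o3 - o1) := by module
    rw [e]
    apply key
    rw [hU, hV, ht, hα, hβ, hk, hs]
    field_simp
    ring
  · apply sqrt_of _ dist_nonneg
    rw [dist_eq_norm]
    have e : (o1 + α • (o2 - o1) + β • (o3 - o1)) - (o2 + (r2 / (r2 + r3)) • (o3 - o2))
        = (α - 1 + r2 / (r2 + r3)) • (o2 - o1) + (β - r2 / (r2 + r3)) • (o3 - o1) := by
      module
    rw [e]
    apply key
    rw [hU, hV, ht, hα, hβ, hk, hs]
    field_simp
    ring
  · apply sqrt_of _ dist_nonneg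
    rw [dist_eq_norm]
    have e : (o1 + α • (o2 - o1) + β • (o3 - o1)) - (o3 + (r3 / (r3 + r1)) • (o1 - o3))
        = α • (o2 - o1) + (β - 1 + r3 / (r3 + r1)) • (o3 - o1) := by
      module
    rw [e]
    apply key
    rw [hU, hV, ht, hα, hβ, hk, hs]
    field_simp
    ring
  · rw [hρsq, dist_eq_norm]
    have e : (o1 + α • (o2 - o1) + β • (o3 - o1)) - o1
        = α • (o2 - o1) + β • (o3 - o1) := by module
    rw [e]
    apply key
    rw [hU, hV, ht, hα, hβ, hk, hs]
    field_simp
    ring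
  · rw [hρsq, dist_eq_norm]
    have e : (o1 + α • (o2 - o1) + β • (o3 - o1)) - o2
        = (α - 1) • (o2 - o1) + β • (o3 - o1) := by module
    rw [e]
    apply key
    rw [hU, hV, ht, hα, hβ, hk, hs]
    field_simp
    ring
  · rw [hρsq, dist_eq_norm]
    have e : (o1 + α • (o2 - o1) + β • (o3 - o1)) - o3
        = α • (o2 - o1) + (β - 1) • (o3 - o1) := by module
    rw [e]
    apply key
    rw [hU, hV, ht, hα, hβ, hk, hs]
    field_simp
    ring
end
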